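/- Let f_n(t), n ≥ 1, be the ℕ×ℕ matrices over ℤ[t] given by the block-diagonal matrix with identity in the first 2n−2 coordinates, a fixed matrix M(t) ∈ Sp_4(ℤ[t]) with M(0) = I and M(1) the block swap in coordinates 2n−1,…,2n+2, and identity beyond. Then the infinite product F(t) = f_1(t) f_2(t) f_3(t) ⋯ is well-defined (the first 2n columns of f_1⋯f_N are independent of N for N ≥ n), each column of F(t) has finitely many nonzero entries, F(0) is the identity, and F(1) is the shift operator sending the standard basis vector e_k to e_{k+2}. -/

import Mathlib

open Matrix

noncomputable section

/-- The standard symplectic form `ω₄` as a matrix over `ℤ[t]`. -/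
def om4 : Matrix (Fin 4) (Fin 4) (Polynomial ℤ) :=
  !![0, 1, 0, 0; -1, 0, 0, 0; 0, 0, 0, 1; 0, 0, -1, 0]

/-- The block permutation matrix exchanging the two standard 2×2 symplectic blocks. -/
def swapZ : Matrix (Fin 4) (Fin 4) ℤ :=
  !![0, 0, 1, 0; 0, 0, 0, 1; 1, 0, 0, 0; 0, 1, 0, 0]

/-- The `ℕ×ℕ` matrix `f_{n+1}(t)`: identity except for a copy of `M(t)` in the 4×4 block
with rows and columns `2n, 2n+1, 2n+2, 2n+3` (i.e. coordinates `2n−1,…,2n+2` in the paper's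
1-based indexing for `f_n`). -/
def fm (M : Matrix (Fin 4) (Fin 4) (Polynomial ℤ)) (n i j : ℕ) : Polynomial ℤ :=
  if h : 2 * n ≤ i ∧ i < 2 * n + 4 ∧ 2 * n ≤ j ∧ j < 2 * n + 4 then
    M ⟨i - 2 * n, by omega⟩ ⟨j - 2 * n, by omega⟩
  else if i = j then 1 else 0

/-- The partial product `f_1(t) f_2(t) ⋯ f_N(t)`, formed entrywise (rows and columns have
finite support, so the finite sums `∑ᶠ` compute the matrix product). -/
def pprod (M : Matrix (Fin 4) (Fin 4) (Polynomial ℤ)) : ℕ → ℕ → ℕ → Polynomial ℤ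
  | 0 => fun i j => if i = j then 1 else 0
  | (N + 1) => fun i j => ∑ᶠ k : ℕ, pprod M N i k * fm M N k j

/-- The infinite product `F(t) = f_1(t) f_2(t) f_3(t) ⋯`: entry `(i,j)` is computed from any
sufficiently long partial product. -/
def bigF (M : Matrix (Fin 4) (Fin 4) (Polynomial ℤ)) (i j : ℕ) : Polynomial ℤ :=
  pprod M (j / 2 + 1) i j


/-!
Outside its 4×4 block, `f_{N+1}` is the identity. Hence multiplying by it only mixes the
columns `2N, …, 2N+3`, so the columns `j < 2n` are frozen from the `n`-th factor on, and rows
beyond the blocks touched so far stay identity rows. At `t = 0` and `t = 1` every factor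
evaluates to a permutation matrix, so the partial products evaluate to permutation matrices of
the composite permutations: the identity, respectively the cyclic shift of the first `N + 1`
symplectic 2-blocks, whose stable part is `j ↦ j + 2`.
-/

section Support

variable (M : Matrix (Fin 4) (Fin 4) (Polynomial ℤ))

lemma fm_of_col_notMem {N j : ℕ} (hj : ¬ (2 * N ≤ j ∧ j < 2 * N + 4)) (k : ℕ) :
    fm M N k j = if k = j then 1 else 0 := by
  rw [fm, dif_neg (by omega)]

lemma fm_of_row_notMem {N k : ℕ} (hk : ¬ (2 * N ≤ k ∧ k < 2 * N + 4)) (j : ℕ) :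
    fm M N k j = if k = j then 1 else 0 := by
  rw [fm, dif_neg (by omega)]

lemma pprod_succ_eq_sum (N i j : ℕ) :
    pprod M (N + 1) i j
      = ∑ k ∈ insert j (Finset.Ico (2 * N) (2 * N + 4)), pprod M N i k * fm M N k j := by
  refine finsum_eq_finsetSum_of_support_subset _ fun k hk => ?_
  by_contra hkS
  simp only [Finset.coe_insert, Finset.coe_Ico, Set.mem_insert_iff, Set.mem_Ico, not_or] at hkS
  exact hk (show pprod M N i k * fm M N k j = 0 by
    rw [fm_of_row_notMem M hkS.2 j, if_neg hkS.1, mul_zero])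

lemma pprod_of_lt_two_mul {n N : ℕ} (hnN : n ≤ N) (i : ℕ) {j : ℕ} (hj : j < 2 * n) :
    pprod M N i j = pprod M n i j := by
  induction N, hnN using Nat.le_induction with
  | base => rfl
  | succ N hnN ih =>
    rw [pprod_succ_eq_sum, Finset.sum_eq_single j, fm_of_col_notMem M (by omega), if_pos rfl,
      mul_one, ih]
    · intro k _ hkj
      rw [fm_of_col_notMem M (by omega), if_neg hkj, mul_zero]
    · exact fun hjS => absurd (Finset.mem_insert_self j _) hjS

lemma pprod_of_two_mul_add_two_le (N : ℕ) {i : ℕ} (hi : 2 * N + 2 ≤ i) (j : ℕ) :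
    pprod M N i j = if i = j then 1 else 0 := by
  induction N generalizing j with
  | zero => rfl
  | succ N ih =>
    simp only [pprod_succ_eq_sum, ih (by omega), ite_mul, one_mul, zero_mul, Finset.sum_ite_eq]
    split_ifs with hiS hij hij
    · rw [hij, fm_of_row_notMem M (by omega), if_pos rfl]
    · rw [fm_of_row_notMem M (by omega), if_neg hij]
    · simp [hij] at hiS
    · rfl

lemma pprod_col_finite (N j : ℕ) : {i | pprod M N i j ≠ 0}.Finite := by
  refine ((Set.finite_Iio (2 * N + 2)).union (Set.finite_singleton j)).subset fun i hi => ?_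
  by_contra hiS
  simp only [Set.mem_union, Set.mem_Iio, Set.mem_singleton_iff, not_or, not_lt] at hiS
  exact hi (by rw [pprod_of_two_mul_add_two_le M N hiS.1, if_neg hiS.2])

end Support

section Evaluation

variable {M : Matrix (Fin 4) (Fin 4) (Polynomial ℤ)}

def blockPerm (τ : Fin 4 → Fin 4) (N j : ℕ) : ℕ :=
  if h : 2 * N ≤ j ∧ j < 2 * N + 4 then 2 * N + τ ⟨j - 2 * N, by omega⟩ else j

def permProd (σ : ℕ → ℕ → ℕ) : ℕ → ℕ → ℕ
  | 0, j => j
  | N + 1, j => permProd σ N (σ N j)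

lemma eval_fm_of_perm {x : ℤ} {τ : Fin 4 → Fin 4}
    (hτ : ∀ a b, (M a b).eval x = if a = τ b then 1 else 0) (N k j : ℕ) :
    (fm M N k j).eval x = if k = blockPerm τ N j then 1 else 0 := by
  unfold blockPerm
  by_cases hj : 2 * N ≤ j ∧ j < 2 * N + 4
  · rw [dif_pos hj]
    by_cases hk : 2 * N ≤ k ∧ k < 2 * N + 4
    · rw [fm, dif_pos ⟨hk.1, hk.2, hj⟩, hτ]
      exact if_congr (by rw [Fin.ext_iff]; simp only; omega) rfl rfl
    · have := (τ ⟨j - 2 * N, by omega⟩).isLt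
      rw [fm_of_row_notMem M hk, if_neg (by omega), if_neg (by omega), Polynomial.eval_zero]
  · rw [dif_neg hj, fm_of_col_notMem M hj, apply_ite (Polynomial.eval x), Polynomial.eval_one,
      Polynomial.eval_zero]

lemma eval_pprod_of_perm {x : ℤ} {σ : ℕ → ℕ → ℕ}
    (hσ : ∀ N k j, (fm M N k j).eval x = if k = σ N j then 1 else 0) (N i j : ℕ) :
    (pprod M N i j).eval x = if i = permProd σ N j then 1 else 0 := by
  induction N generalizing j with
  | zero =>
    show (if i = j then (1 : Polynomial ℤ) else 0).eval x = _
    rw [apply_ite (Polynomial.eval x), Polynomial.eval_one, Polynomial.eval_zero, permProd]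
  | succ N ih =>
    -- `fm` is the identity outside its block, so `σ N j` cannot leave the block unless it is `j`.
    have hmem : σ N j ∈ insert j (Finset.Ico (2 * N) (2 * N + 4)) := by
      by_contra hS
      simp only [Finset.mem_insert, Finset.mem_Ico, not_or] at hS
      have := hσ N (σ N j) j
      rw [fm_of_row_notMem M hS.2, if_neg hS.1, if_pos rfl, Polynomial.eval_zero] at this
      exact zero_ne_one this
    simp only [pprod_succ_eq_sum, Polynomial.eval_finsetSum, Polynomial.eval_mul, ih, hσ,
      mul_ite, mul_one, mul_zero, Finset.sum_ite_eq', if_pos hmem, permProd]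
    exact if_congr Iff.rfl rfl rfl

lemma blockPerm_id (N j : ℕ) : blockPerm id N j = j := by
  simp only [blockPerm, id]
  split_ifs <;> omega

lemma permProd_blockPerm_id (N j : ℕ) : permProd (blockPerm id) N j = j := by
  induction N with
  | zero => rfl
  | succ N ih => rw [permProd, blockPerm_id, ih]

lemma eval_pprod_zero (h0 : M.map (Polynomial.eval 0) = 1) (N i j : ℕ) :
    (pprod M N i j).eval 0 = if i = j then 1 else 0 := by
  have hτ (a b : Fin 4) : (M a b).eval 0 = if a = id b then 1 else 0 := by
    rw [← Matrix.map_apply (f := Polynomial.eval 0), h0, Matrix.one_apply, id]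
  rw [eval_pprod_of_perm (eval_fm_of_perm hτ), permProd_blockPerm_id]

lemma blockPerm_add_two (N j : ℕ) :
    blockPerm (· + 2) N j =
      if 2 * N ≤ j ∧ j < 2 * N + 2 then j + 2
      else if 2 * N + 2 ≤ j ∧ j < 2 * N + 4 then j - 2 else j := by
  unfold blockPerm
  simp only [Fin.val_add]
  split_ifs <;> omega

/-- The product of the block swaps `f_1(1) ⋯ f_N(1)` cyclically permutes the first `N + 1`
symplectic 2-blocks. -/
lemma permProd_blockPerm_add_two (N j : ℕ) :
    permProd (blockPerm (· + 2)) N j =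
      if j < 2 * N then j + 2 else if j < 2 * N + 2 then j - 2 * N else j := by
  induction N generalizing j with
  | zero => simp [permProd]
  | succ N ih =>
    rw [permProd, ih, blockPerm_add_two]
    split_ifs <;> omega

lemma eval_pprod_one (h1 : M.map (Polynomial.eval 1) = swapZ) (N i j : ℕ) :
    (pprod M N i j).eval 1 =
      if i = (if j < 2 * N then j + 2 else if j < 2 * N + 2 then j - 2 * N else j) then 1
      else 0 := by
  have hτ (a b : Fin 4) : (M a b).eval 1 = if a = b + 2 then 1 else 0 := by
    rw [← Matrix.map_apply (f := Polynomial.eval 1), h1]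
    fin_cases a <;> fin_cases b <;> rfl
  rw [eval_pprod_of_perm (eval_fm_of_perm hτ), permProd_blockPerm_add_two]

end Evaluation

theorem stmt18_general (M : Matrix (Fin 4) (Fin 4) (Polynomial ℤ))
    (h0 : M.map (Polynomial.eval 0) = 1)
    (h1 : M.map (Polynomial.eval 1) = swapZ) :
    (∀ n N, n ≤ N → ∀ i j, j < 2 * n → pprod M N i j = pprod M n i j) ∧
    (∀ j, {i | bigF M i j ≠ 0}.Finite) ∧
    (∀ i j, (bigF M i j).eval 0 = if i = j then 1 else 0) ∧
    (∀ i j, (bigF M i j).eval 1 = if i = j + 2 then 1 else 0) := by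
  refine ⟨fun n N hnN i j hj => pprod_of_lt_two_mul M hnN i hj,
    fun j => pprod_col_finite M _ j, fun i j => eval_pprod_zero h0 _ i j, fun i j => ?_⟩
  rw [bigF, eval_pprod_one h1, if_pos (show j < 2 * (j / 2 + 1) by omega)]

/-- Given `M(t) ∈ Sp₄(ℤ[t])` with `M(0) = I` and `M(1)` the block swap, the infinite product
`F(t) = f_1(t) f_2(t) ⋯` is well-defined (the first `2n` columns of `f_1 ⋯ f_N` are
independent of `N` for `N ≥ n`), each column of `F(t)` has finitely many nonzero entries,
`F(0)` is the identity, and `F(1)` is the shift operator sending `e_k ↦ e_{k+2}`. -/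
theorem stmt18 (M : Matrix (Fin 4) (Fin 4) (Polynomial ℤ))
    (hsymp : Mᵀ * om4 * M = om4)
    (h0 : M.map (Polynomial.eval 0) = 1)
    (h1 : M.map (Polynomial.eval 1) = swapZ) :
    (∀ n N, n ≤ N → ∀ i j, j < 2 * n → pprod M N i j = pprod M n i j) ∧
    (∀ j, {i | bigF M i j ≠ 0}.Finite) ∧
    (∀ i j, (bigF M i j).eval 0 = if i = j then 1 else 0) ∧
    (∀ i j, (bigF M i j).eval 1 = if i = j + 2 then 1 else 0) :=
  stmt18_general M h0 h1
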